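/- Let n ≥ 1. For the quaternion-type subspace 2̄ := {U ∈ Cl_{p,q} : involute U = U ∧ reverse U = −U}, the real dimension satisfies (as an equality of real numbers) 4 · (Module.finrank ℝ 2̄) = 2^n − 2·(√2)^n · cos(πn/4), i.e. dim 2̄ = 2^{n−2} − 2^{(n−2)/2} cos(πn/4). -/

import Mathlib

open CliffordAlgebra

/-- The quadratic form of signature `(p,q)` on `Fin (p+q) → ℝ`:
`Q(x) = ∑_{i<p} x_i² − ∑_{p≤i<n} x_i²`. -/
noncomputable def Qpq (p q : ℕ) : QuadraticForm ℝ (Fin (p + q) → ℝ) :=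
  QuadraticMap.weightedSumSquares ℝ (fun i : Fin (p + q) => if (i : ℕ) < p then (1 : ℝ) else -1)

/-- The quaternion-type subspace: elements `U` with `involute U = U` and `reverse U = -U`. -/
noncomputable def quatType2 (p q : ℕ) : Submodule ℝ (CliffordAlgebra (Qpq p q)) where
  carrier := {U | involute U = U ∧ reverse U = -U}
  add_mem' := by
    rintro a b ⟨ha1, ha2⟩ ⟨hb1, hb2⟩
    exact ⟨by simp [ha1, hb1]; all_goals abel, by simp [ha2, hb2]; all_goals abel⟩
  zero_mem' := by simp
  smul_mem' := by
    rintro c a ⟨h1, h2⟩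
    exact ⟨by rw [map_smul, h1]; all_goals module, by rw [map_smul, h2]; all_goals module⟩


/-! The blades `e_{s₁} ⋯ e_{sₖ}` (`s₁ < ⋯ < sₖ`) of the orthogonal basis `eᵢ` form a basis of
`Cl_{p,q}`: it is the image of the standard basis of the exterior algebra under the Chevalley
isomorphism, which fixes products of pairwise orthogonal vectors. On the blade of `s`, `involute`
and `reverse` act by the signs `(-1)^|s|` and `(-1)^(|s| choose 2)`, so `2̄` is spanned by the
blades with `|s| ≡ 2 mod 4`. These are counted by the filter
`4·[k ≡ 2 mod 4] = 1 + (-1)^k - 2 Re(iᵏ)`, which sums over all `s` to `2ⁿ - 2 Re((1 + i)ⁿ)`. -/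

theorem Nat.even_and_odd_choose_two_iff (k : ℕ) : Even k ∧ Odd (k.choose 2) ↔ k % 4 = 2 := by
  induction k using Nat.strong_induction_on with
  | _ k ih =>
    match k, ih with
    | 0, _ | 1, _ | 2, _ | 3, _ => decide
    | k + 4, ih =>
      have hstep : (k + 4).choose 2 = k.choose 2 + 2 * (2 * k + 3) := by
        simp only [Nat.choose_succ_succ, Nat.choose_one_right, Nat.choose_zero_right]; ring
      have hk := ih k (by omega)
      rw [hstep]
      simp only [Nat.even_iff, Nat.odd_iff] at hk ⊢
      omega

namespace List
variable {A : Type*} [Ring A]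

theorem prod_mul_of_forall_anticomm {a : A} :
    ∀ l : List A, (∀ b ∈ l, a * b = -(b * a)) → l.prod * a = (-1) ^ l.length * (a * l.prod)
  | [] => fun _ => by simp
  | b :: l => fun h => by
    rw [prod_cons, mul_assoc, prod_mul_of_forall_anticomm l fun c hc => h c (mem_cons_of_mem b hc),
      ← mul_assoc b, ← ((Commute.neg_one_left b).pow_left _).eq, ← mul_assoc a,
      h b mem_cons_self, length_cons, pow_succ]
    noncomm_ring

theorem prod_reverse_of_pairwise_anticomm :
    ∀ l : List A, l.Pairwise (fun a b => a * b = -(b * a)) →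
      l.reverse.prod = (-1) ^ l.length.choose 2 * l.prod
  | [] => fun _ => by simp
  | a :: l => fun h => by
    rw [pairwise_cons] at h
    rw [reverse_cons, prod_append, prod_reverse_of_pairwise_anticomm l h.2, prod_singleton,
      mul_assoc, prod_mul_of_forall_anticomm l h.1, ← mul_assoc, ← pow_add, length_cons,
      Nat.choose_succ_succ, Nat.choose_one_right, add_comm, prod_cons]

end List

theorem Finset.pairwise_ofFn_orderEmbOfFin {I : Type*} [LinearOrder I] {r : I → I → Prop}
    (hr : ∀ i j, i ≠ j → r i j) (s : Finset I) : (List.ofFn (s.orderEmbOfFin rfl)).Pairwise r :=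
  List.pairwise_ofFn.2 fun _ _ hij => hr _ _ ((s.orderEmbOfFin rfl).strictMono hij).ne

theorem Module.Basis.repr_apply_of_apply_eq_smul {ι R V : Type*} [CommSemiring R]
    [AddCommMonoid V] [Module R V] (b : Module.Basis ι R V) {f : V →ₗ[R] V} {c : ι → R}
    (hf : ∀ i, f (b i) = c i • b i) (x : V) (i : ι) : b.repr (f x) i = c i * b.repr x i := by
  have : (b.coord i).comp f = c i • b.coord i :=
    b.ext fun j => by by_cases hij : j = i <;> simp [hf, hij]
  exact congr($this x)

theorem Module.Basis.finrank_span_image {ι K V : Type*} [DivisionRing K] [AddCommGroup V]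
    [Module K V] (b : Module.Basis ι K V) (S : Finset ι) :
    Module.finrank K (Submodule.span K (b '' S)) = S.card := by
  rw [Set.image_eq_range]
  exact (finrank_span_eq_card (b.linearIndependent.comp _ Subtype.val_injective)).trans
    (Fintype.card_coe S)

theorem QuadraticMap.isOrtho_weightedSumSquares_single {ι R : Type*} [Fintype ι] [DecidableEq ι]
    [CommRing R] (w : ι → R) {i j : ι} (hij : i ≠ j) (a b : R) :
    (weightedSumSquares R w).IsOrtho (Pi.single i a) (Pi.single j b) := by
  rw [isOrtho_def, weightedSumSquares_apply, weightedSumSquares_apply, weightedSumSquares_apply,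
    ← Finset.sum_add_distrib]
  refine Finset.sum_congr rfl fun k _ => ?_
  by_cases hki : k = i <;> by_cases hkj : k = j <;> simp_all

namespace CliffordAlgebra

section Blade
variable {R M : Type*} [CommRing R] [AddCommGroup M] [Module R M]

theorem contractLeft_prod_map_ι_eq_zero {Q : QuadraticForm R M} (d : Module.Dual R M) :
    ∀ l : List M, (∀ v ∈ l, d v = 0) → contractLeft d (l.map (ι Q)).prod = 0
  | [] => fun _ => by simp [contractLeft_one]
  | v :: l => fun hl => by
    rw [List.map_cons, List.prod_cons, contractLeft_ι_mul, hl v List.mem_cons_self,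
      contractLeft_prod_map_ι_eq_zero d l fun u hu => hl u (List.mem_cons_of_mem v hu)]
    simp

theorem changeForm_prod_map_ι {Q Q' : QuadraticForm R M} {B : LinearMap.BilinForm R M}
    (h : B.toQuadraticMap = Q' - Q) :
    ∀ l : List M, l.Pairwise (fun u v => B u v = 0) →
      changeForm h (l.map (ι Q)).prod = (l.map (ι Q')).prod
  | [] => fun _ => by simp [changeForm_one]
  | v :: l => fun hl => by
    rw [List.pairwise_cons] at hl
    rw [List.map_cons, List.prod_cons, changeForm_ι_mul, changeForm_prod_map_ι h l hl.2,
      contractLeft_prod_map_ι_eq_zero _ l hl.1, sub_zero, List.map_cons, List.prod_cons]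

variable {I : Type*} [LinearOrder I]

noncomputable def blade (Q : QuadraticForm R M) (v : I → M) (s : Finset I) : CliffordAlgebra Q :=
  ((List.ofFn (v ∘ s.orderEmbOfFin rfl)).map (ι Q)).prod

theorem involute_blade (Q : QuadraticForm R M) (v : I → M) (s : Finset I) :
    involute (blade Q v s) = (-1 : R) ^ s.card • blade Q v s := by
  rw [blade, involute_prod_map_ι, List.length_ofFn]

theorem reverse_blade {Q : QuadraticForm R M} {v : I → M}
    (hv : ∀ i j, i ≠ j → Q.IsOrtho (v i) (v j)) (s : Finset I) :
    reverse (blade Q v s) = (-1 : R) ^ s.card.choose 2 • blade Q v s := by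
  have hanti : ((List.ofFn (v ∘ s.orderEmbOfFin rfl)).map (ι Q)).Pairwise
      (fun a b => a * b = -(b * a)) := by
    rw [List.pairwise_map, ← List.map_ofFn]
    exact List.pairwise_map.2 (Finset.pairwise_ofFn_orderEmbOfFin
      (fun i j hij => ι_mul_ι_comm_of_isOrtho (hv i j hij)) s)
  rw [blade, reverse_prod_map_ι, List.prod_reverse_of_pairwise_anticomm _ hanti,
    List.length_map, List.length_ofFn, Algebra.smul_def, map_pow, map_neg, map_one]

theorem exists_basis_eq_blade [Invertible (2 : R)] {Q : QuadraticForm R M}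
    (b : Module.Basis I R M) (hb : ∀ i j, i ≠ j → Q.IsOrtho (b i) (b j)) :
    ∃ B : Module.Basis (Finset I) R (CliffordAlgebra Q), ⇑B = blade Q b := by
  refine ⟨b.ExteriorAlgebra.map (equivExterior Q).symm, funext fun s => ?_⟩
  have hext : b.ExteriorAlgebra s =
      ((List.ofFn (b ∘ s.orderEmbOfFin rfl)).map (ι (0 : QuadraticForm R M))).prod := by
    rw [ExteriorAlgebra.basis_apply]
    simp only [Set.powersetCard.prodEquiv_symm_apply, ExteriorAlgebra.ιMulti_apply,
      Function.comp_apply, List.map_ofFn]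
    rfl
  rw [Module.Basis.map_apply, hext, equivExterior, changeFormEquiv_symm]
  refine changeForm_prod_map_ι (changeForm.neg_proof changeForm.associated_neg_proof) _ ?_
  rw [← List.map_ofFn]
  refine List.pairwise_map.2 (Finset.pairwise_ofFn_orderEmbOfFin (fun i j hij => ?_) s)
  simp [map_neg, QuadraticMap.associated_isOrtho, hb i j hij]

end Blade

theorem involute_eq_self_and_reverse_eq_neg_iff {K M I : Type*} [Field K] [Invertible (2 : K)]
    [AddCommGroup M] [Module K M] [LinearOrder I] {Q : QuadraticForm K M} {v : I → M}
    (hv : ∀ i j, i ≠ j → Q.IsOrtho (v i) (v j))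
    {B : Module.Basis (Finset I) K (CliffordAlgebra Q)} (hB : ⇑B = blade Q v)
    (U : CliffordAlgebra Q) :
    involute U = U ∧ reverse U = -U ↔ ∀ s, B.repr U s ≠ 0 → s.card % 4 = 2 := by
  have hinv : ∀ s, B.repr (involute U) s = (-1) ^ s.card * B.repr U s :=
    B.repr_apply_of_apply_eq_smul (f := involute.toLinearMap)
      (fun s => by simp [hB, involute_blade]) U
  have hrev : ∀ s, B.repr (reverse U) s = (-1) ^ s.card.choose 2 * B.repr U s :=
    B.repr_apply_of_apply_eq_smul (f := reverse) (fun s => by rw [hB, reverse_blade hv]) U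
  have hne : (-1 : K) ≠ 1 := fun h => Invertible.ne_zero (2 : K) (by linear_combination -h)
  rw [B.ext_elem_iff, B.ext_elem_iff, ← forall_and]
  refine forall_congr' fun s => ?_
  rw [hinv, hrev, map_neg, Finsupp.neg_apply]
  rcases eq_or_ne (B.repr U s) 0 with hc | hc
  · simp [hc]
  · rw [neg_eq_neg_one_mul (B.repr U s), mul_eq_right₀ hc, mul_left_inj' hc,
      neg_one_pow_eq_one_iff_even hne, neg_one_pow_eq_neg_one_iff_odd hne,
      Nat.even_and_odd_choose_two_iff]
    exact ⟨fun h _ => h, fun h => h hc⟩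

end CliffordAlgebra

open Finset

theorem finrank_quatType2 (p q : ℕ) :
    Module.finrank ℝ (quatType2 p q) = #{s : Finset (Fin (p + q)) | s.card % 4 = 2} := by
  have hv : ∀ i j, i ≠ j → (Qpq p q).IsOrtho (Pi.basisFun ℝ _ i) (Pi.basisFun ℝ _ j) :=
    fun i j hij => by
      simpa [Qpq] using QuadraticMap.isOrtho_weightedSumSquares_single _ hij (1 : ℝ) 1
  obtain ⟨B, hB⟩ := exists_basis_eq_blade _ hv
  have hspan : quatType2 p q = Submodule.span ℝ (B '' ↑({s : Finset (Fin (p + q)) | s.card % 4 = 2} : Finset _)) := by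
    ext U
    rw [B.mem_span_image]
    exact (involute_eq_self_and_reverse_eq_neg_iff hv hB U).trans (by simp [Set.subset_def])
  rw [hspan, B.finrank_span_image]

theorem neg_one_pow_sub_two_mul_re_I_pow (k : ℕ) :
    1 + (-1 : ℝ) ^ k - 2 * (Complex.I ^ k).re = if k % 4 = 2 then 4 else 0 := by
  rw [← Nat.div_add_mod k 4, pow_add, pow_add, pow_mul, pow_mul, Complex.I_pow_four]
  have : k % 4 < 4 := Nat.mod_lt _ (by norm_num)
  interval_cases k % 4 <;> norm_num [pow_succ]

theorem re_one_add_I_pow (n : ℕ) :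
    ((1 + Complex.I) ^ n).re = Real.sqrt 2 ^ n * Real.cos (Real.pi * n / 4) := by
  have h : 1 + Complex.I = Real.sqrt 2 *
      (Complex.cos (Real.pi / 4 : ℝ) + Complex.sin (Real.pi / 4 : ℝ) * Complex.I) := by
    rw [← Complex.ofReal_cos, ← Complex.ofReal_sin, Real.cos_pi_div_four, Real.sin_pi_div_four]
    apply Complex.ext <;> simp [← mul_div_assoc]
  have harg : (n : ℂ) * (Real.pi / 4 : ℝ) = (Real.pi * n / 4 : ℝ) := by push_cast; ring
  rw [h, mul_pow, Complex.cos_add_sin_mul_I_pow, harg, ← Complex.ofReal_cos, ← Complex.ofReal_sin,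
    ← Complex.ofReal_pow, Complex.re_ofReal_mul]
  simp only [Complex.add_re, Complex.ofReal_re, Complex.mul_I_re, Complex.ofReal_im, neg_zero,
    add_zero]

theorem four_mul_card_filter_card_mod_four_eq_two (n : ℕ) (hn : n ≠ 0) :
    4 * (#{s : Finset (Fin n) | s.card % 4 = 2} : ℝ) =
      2 ^ n - 2 * Real.sqrt 2 ^ n * Real.cos (Real.pi * n / 4) := by
  have hbinom {R : Type} [CommRing R] (a : R) : ∑ s : Finset (Fin n), a ^ s.card = (a + 1) ^ n := by
    simpa using Fintype.sum_pow_mul_eq_add_pow (Fin n) a 1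
  calc 4 * (#{s : Finset (Fin n) | s.card % 4 = 2} : ℝ)
      = ∑ s : Finset (Fin n), (1 + (-1 : ℝ) ^ s.card - 2 * (Complex.I ^ s.card).re) := by
        simp only [neg_one_pow_sub_two_mul_re_I_pow, sum_ite, sum_const_zero, sum_const]
        simp [mul_comm]
    _ = 2 ^ n - 2 * ((1 + Complex.I) ^ n).re := by
        rw [sum_sub_distrib, sum_add_distrib, ← mul_sum, ← Complex.re_sum, hbinom, hbinom,
          neg_add_cancel, zero_pow hn, add_comm Complex.I]
        simp
    _ = _ := by rw [re_one_add_I_pow]; ring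

/-- `4 · dim = 2^n - 2·(√2)^n·cos(πn/4)`. -/
theorem statement2 (p q : ℕ) (hn : 1 ≤ p + q) :
    4 * (Module.finrank ℝ (quatType2 p q) : ℝ) =
      2 ^ (p + q) - 2 * Real.sqrt 2 ^ (p + q) * Real.cos (Real.pi * (p + q) / 4) := by
  rw [finrank_quatType2, four_mul_card_filter_card_mod_four_eq_two _ (by omega)]
  push_cast
  rfl
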